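/- arXiv:2205.11296 — 5 statements merged into one kernel-verified Lean document; each statement's English description precedes it below -/
import Mathlib

section
/- Let Γ₁ and Γ₂ be groups such that for every nonidentity element x of Γ₁ (resp. Γ₂) the centralizer of x is infinite cyclic (isomorphic to ℤ). Suppose ψ is an automorphism of Γ := Γ₁ × Γ₂ and Γ₁ is not isomorphic to ℤ. Then for every h ∈ Γ₂, ψ(1,h) lies in {1} × Γ₂ or in Γ₁ × {1}. -/
/-!
If `ψ (1, h) = (a, b)` with `a ≠ 1` and `b ≠ 1`, then `ψ` maps `Γ₁ × {1}`, which commutes with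
`(1, h)`, injectively into the centralizer of `(a, b)`, namely `C(a) × C(b) ≅ ℤ × ℤ`. Hence `Γ₁`
is abelian, so `Γ₁ = C(a) ≅ ℤ`.
-/

open Subgroup

lemma IsMulCommutative.of_mulEquiv {M N : Type*} [Mul M] [CommMagma N] (e : M ≃* N) :
    IsMulCommutative M :=
  .of_comm fun a b => e.injective (by rw [map_mul, map_mul, mul_comm])

section Prod

variable {G₁ G₂ : Type*} [Group G₁] [Group G₂]

lemma Subgroup.mem_centralizer_singleton_prod_iff {c p : G₁ × G₂} :
    p ∈ centralizer {c} ↔ p.1 ∈ centralizer {c.1} ∧ p.2 ∈ centralizer {c.2} := by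
  simp only [mem_centralizer_singleton_iff, Prod.ext_iff, Prod.fst_mul, Prod.snd_mul]

lemma Subgroup.isMulCommutative_centralizer_prod {c : G₁ × G₂}
    [IsMulCommutative (centralizer {c.1})] [IsMulCommutative (centralizer {c.2})] :
    IsMulCommutative (centralizer {c}) := by
  refine .of_setLike_mul_comm fun p hp q hq => ?_
  rw [mem_centralizer_singleton_prod_iff] at hp hq
  exact Prod.ext (setLike_mul_comm hp.1 hq.1) (setLike_mul_comm hp.2 hq.2)

end Prod

lemma IsMulCommutative.of_injective_of_commute {K H : Type*} [Group K] [Group H] {f : K →* H}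
    (hf : Function.Injective f) {c : H} [IsMulCommutative (centralizer {c})]
    (hc : ∀ k, Commute (f k) c) : IsMulCommutative K :=
  .of_comm fun x y => hf <| by
    simpa only [map_mul] using setLike_mul_comm (mem_centralizer_singleton_iff.mpr (hc x).eq)
      (mem_centralizer_singleton_iff.mpr (hc y).eq)

theorem aut_prod_factor {Γ₁ Γ₂ : Type*} [Group Γ₁] [Group Γ₂]
    (hc₁ : ∀ x : Γ₁, x ≠ 1 → Nonempty (Subgroup.centralizer ({x} : Set Γ₁) ≃* Multiplicative ℤ))
    (hc₂ : ∀ x : Γ₂, x ≠ 1 → Nonempty (Subgroup.centralizer ({x} : Set Γ₂) ≃* Multiplicative ℤ))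
    (hΓ₁ : ¬ Nonempty (Γ₁ ≃* Multiplicative ℤ))
    (ψ : (Γ₁ × Γ₂) ≃* (Γ₁ × Γ₂)) :
    ∀ h : Γ₂, (ψ (1, h)).1 = 1 ∨ (ψ (1, h)).2 = 1 := by
  intro h
  by_contra! ⟨ha, hb⟩
  obtain ⟨ea⟩ := hc₁ _ ha
  obtain ⟨eb⟩ := hc₂ _ hb
  have := IsMulCommutative.of_mulEquiv ea
  have := IsMulCommutative.of_mulEquiv eb
  have : IsMulCommutative (centralizer {ψ (1, h)}) := isMulCommutative_centralizer_prod
  have : IsMulCommutative Γ₁ :=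
    IsMulCommutative.of_injective_of_commute
      (f := (ψ : Γ₁ × Γ₂ →* Γ₁ × Γ₂).comp (.inl Γ₁ Γ₂)) (c := ψ (1, h))
      (ψ.injective.comp (Prod.mk_left_injective 1))
      fun x => (MonoidHom.commute_inl_inr x h).map ψ
  have htop : centralizer {(ψ (1, h)).1} = ⊤ :=
    centralizer_eq_top_iff_subset.mpr (by simp [center_eq_top])
  exact hΓ₁ ⟨(topEquiv.symm.trans (MulEquiv.subgroupCongr htop.symm)).trans ea⟩
end

section
/- Let Γ₁ and Γ₂ be groups in which every nontrivial element has centralizer isomorphic to ℤ, and suppose Γ₁ and Γ₂ are not isomorphic to each other and neither is isomorphic to ℤ. Then every automorphism ψ of Γ₁ × Γ₂ satisfies ψ({1} × Γ₂) = {1} × Γ₂ and ψ(Γ₁ × {1}) = Γ₁ × {1}, hence ψ splits as a product ψ₁ × ψ₂ of automorphisms of the factors. -/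
/-!
In a nonabelian group in which every nontrivial element has abelian centralizer, an element has
abelian centralizer exactly when it is nontrivial; a group as in the theorem is nonabelian, since
otherwise it would be the centralizer of any of its nontrivial elements, hence `ℤ`. So in
`Γ₁ × Γ₂` the elements with nonabelian centralizer are exactly those of `Γ₁ × 1 ∪ 1 × Γ₂`, a set
that every automorphism preserves. A subgroup contained in a union of two subgroups lies in one of
them, so `ψ` either preserves or swaps the two factors, and a swap would give `Γ₁ ≃* Γ₂`.
-/

def HasCommCentralizer {G : Type*} [Mul G] (x : G) : Prop :=
  ∀ ⦃a b : G⦄, Commute a x → Commute b x → Commute a b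

section CommCentralizer

variable {G H C : Type*}

theorem hasCommCentralizer_one_iff [MulOneClass G] :
    HasCommCentralizer (1 : G) ↔ ∀ a b : G, Commute a b :=
  ⟨fun h a b => h (Commute.one_right a) (Commute.one_right b), fun h a b _ _ => h a b⟩

theorem HasCommCentralizer.map [Mul G] [Mul H] {x : G} (h : HasCommCentralizer x) (e : G ≃* H) :
    HasCommCentralizer (e x) := by
  intro a b ha hb
  have ha' : Commute (e.symm a) x := by simpa using ha.map e.symm
  have hb' : Commute (e.symm b) x := by simpa using hb.map e.symm
  simpa using (h ha' hb').map e

theorem MulEquiv.hasCommCentralizer_apply_iff [Mul G] [Mul H] (e : G ≃* H) {x : G} :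
    HasCommCentralizer (e x) ↔ HasCommCentralizer x :=
  ⟨fun h => by simpa using h.map e.symm, fun h => h.map e⟩

theorem Prod.hasCommCentralizer_iff [MulOneClass G] [MulOneClass H] {x : G × H} :
    HasCommCentralizer x ↔ HasCommCentralizer x.1 ∧ HasCommCentralizer x.2 := by
  simp only [HasCommCentralizer, Prod.forall, Prod.commute_iff]
  refine ⟨fun h => ⟨fun a b ha hb => ?_, fun a b ha hb => ?_⟩,
    fun h a₁ a₂ b₁ b₂ ha hb => ⟨h.1 ha.1 hb.1, h.2 ha.2 hb.2⟩⟩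
  · exact (h a 1 b 1 ⟨ha, Commute.one_left _⟩ ⟨hb, Commute.one_left _⟩).1
  · exact (h 1 a 1 b ⟨Commute.one_left _, ha⟩ ⟨Commute.one_left _, hb⟩).2

theorem hasCommCentralizer_of_centralizer_mulEquiv [Group G] [CommMonoid C] {x : G}
    (e : Subgroup.centralizer ({x} : Set G) ≃* C) : HasCommCentralizer x := by
  intro a b ha hb
  have mem {y : G} (hy : Commute y x) : y ∈ Subgroup.centralizer ({x} : Set G) := by
    simpa [Subgroup.mem_centralizer_iff] using hy.eq.symm
  simpa using ((Commute.all (e ⟨a, mem ha⟩) (e ⟨b, mem hb⟩)).map e.symm).map (Subgroup.subtype _)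

theorem hasCommCentralizer_iff_ne_one [Group G] [Nontrivial G] [CommMonoid C]
    (hc : ∀ x : G, x ≠ 1 → Nonempty (Subgroup.centralizer ({x} : Set G) ≃* C))
    (hG : ¬ Nonempty (G ≃* C)) (x : G) : HasCommCentralizer x ↔ x ≠ 1 := by
  refine ⟨?_, fun hx => (hc x hx).elim hasCommCentralizer_of_centralizer_mulEquiv⟩
  rintro h rfl
  obtain ⟨x₀, hx₀⟩ := exists_ne (1 : G)
  obtain ⟨e⟩ := hc x₀ hx₀
  have htop : Subgroup.centralizer ({x₀} : Set G) = ⊤ :=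
    Subgroup.centralizer_eq_top_iff_subset.2 <| Set.singleton_subset_iff.2 <|
      Subgroup.mem_center_iff.2 fun g => hasCommCentralizer_one_iff.1 h g x₀
  exact hG ⟨Subgroup.topEquiv.symm.trans ((MulEquiv.subgroupCongr htop.symm).trans e)⟩

theorem nontrivial_of_hasCommCentralizer_iff [Monoid G]
    (hG : ∀ x : G, HasCommCentralizer x ↔ x ≠ 1) : Nontrivial G := by
  by_contra h
  rw [not_nontrivial_iff_subsingleton] at h
  exact (hG 1).1 (hasCommCentralizer_one_iff.2 fun a b => Subsingleton.elim a b ▸ .refl a) rfl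

end CommCentralizer

theorem Subgroup.map_eq_or_map_eq_of_preimage_union_eq {G : Type*} [Group G] {A B : Subgroup G}
    (hAB : ¬ A ≤ B) (ψ : G ≃* G) (hψ : ψ ⁻¹' ((A : Set G) ∪ B) = (A : Set G) ∪ B) :
    A.map ψ.toMonoidHom = A ∨ A.map ψ.toMonoidHom = B := by
  have map_eq {C : Subgroup G} (hC : (C : Set G) ⊆ A ∪ B) (hAC : A.map ψ.toMonoidHom ≤ C) :
      A.map ψ.toMonoidHom = C := by
    refine hAC.antisymm ?_
    rw [map_equiv_eq_comap_symm', ← map_le_iff_le_comap, ← comap_equiv_eq_map_symm']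
    have : (C.comap ψ.toMonoidHom : Set G) ⊆ A ∪ B := (Set.preimage_mono hC).trans hψ.subset
    exact (SubgroupClass.subset_union.1 this).resolve_right
      fun hB => hAB ((map_le_iff_le_comap.1 hAC).trans hB)
  have hA : (A.map ψ.toMonoidHom : Set G) ⊆ A ∪ B := by
    rw [coe_map]
    have : (A : Set G) ⊆ ψ ⁻¹' (A ∪ B) := Set.subset_union_left.trans hψ.symm.subset
    exact Set.image_subset_iff.2 this
  exact (SubgroupClass.subset_union.1 hA).imp (map_eq Set.subset_union_left)
    (map_eq Set.subset_union_right)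

section Product

variable {G₁ G₂ H₁ H₂ : Type*} [Group G₁] [Group G₂] [Group H₁] [Group H₂]

theorem MulEquiv.exists_apply_eq_of_map_prod_le (ψ : G₁ × G₂ ≃* H₁ × H₂)
    (h₁ : ((⊤ : Subgroup G₁).prod (⊥ : Subgroup G₂)).map ψ.toMonoidHom ≤ (⊤ : Subgroup H₁).prod ⊥)
    (h₂ : ((⊥ : Subgroup G₁).prod (⊤ : Subgroup G₂)).map ψ.toMonoidHom ≤ (⊥ : Subgroup H₁).prod ⊤) :
    ∃ (ψ₁ : G₁ ≃* H₁) (ψ₂ : G₂ ≃* H₂), ∀ g h, ψ (g, h) = (ψ₁ g, ψ₂ h) := by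
  have inl (g : G₁) : (ψ (g, 1)).2 = 1 := by
    simpa [Subgroup.mem_prod] using h₁ ⟨(g, 1), by simp [Subgroup.mem_prod], rfl⟩
  have inr (h : G₂) : (ψ (1, h)).1 = 1 := by
    simpa [Subgroup.mem_prod] using h₂ ⟨(1, h), by simp [Subgroup.mem_prod], rfl⟩
  let F := (MonoidHom.fst H₁ H₂).comp (ψ.toMonoidHom.comp (MonoidHom.inl G₁ G₂))
  let K := (MonoidHom.snd H₁ H₂).comp (ψ.toMonoidHom.comp (MonoidHom.inr G₁ G₂))
  have hψ : ⇑ψ = Prod.map F K := by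
    ext ⟨g, h⟩ <;> rw [show (g, h) = (g, 1) * (1, h) by simp, map_mul] <;> simp [F, K, inl, inr]
  obtain ⟨hF, hK⟩ := Prod.map_bijective.1 (hψ ▸ ψ.bijective)
  exact ⟨.ofBijective F hF, .ofBijective K hK, fun g h => congrFun hψ (g, h)⟩

end Product

theorem map_prod_factors_eq_of_hasCommCentralizer_iff {G₁ G₂ : Type*} [Group G₁] [Group G₂]
    (hG₁ : ∀ x : G₁, HasCommCentralizer x ↔ x ≠ 1) (hG₂ : ∀ x : G₂, HasCommCentralizer x ↔ x ≠ 1)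
    (hne : ¬ Nonempty (G₁ ≃* G₂)) (ψ : G₁ × G₂ ≃* G₁ × G₂) :
    ((⊥ : Subgroup G₁).prod (⊤ : Subgroup G₂)).map ψ.toMonoidHom = (⊥ : Subgroup G₁).prod ⊤ ∧
    ((⊤ : Subgroup G₁).prod (⊥ : Subgroup G₂)).map ψ.toMonoidHom = (⊤ : Subgroup G₁).prod ⊥ := by
  have := nontrivial_of_hasCommCentralizer_iff hG₁
  have := nontrivial_of_hasCommCentralizer_iff hG₂
  set N₁ := (⊤ : Subgroup G₁).prod (⊥ : Subgroup G₂)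
  set N₂ := (⊥ : Subgroup G₁).prod (⊤ : Subgroup G₂)
  have hunion : (N₂ : Set (G₁ × G₂)) ∪ N₁ = {x | ¬ HasCommCentralizer x} := by
    ext x
    simp [N₁, N₂, Subgroup.mem_prod, Prod.hasCommCentralizer_iff, hG₁, hG₂, or_iff_not_imp_left]
  have hψ : ψ ⁻¹' ((N₂ : Set (G₁ × G₂)) ∪ N₁) = (N₂ : Set (G₁ × G₂)) ∪ N₁ := by
    rw [hunion]
    ext x
    simp [ψ.hasCommCentralizer_apply_iff]
  obtain ⟨g, hg⟩ := exists_ne (1 : G₁)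
  obtain ⟨h, hh⟩ := exists_ne (1 : G₂)
  have hN₂ : ¬ N₂ ≤ N₁ := fun hle => hh (by simpa [N₁, N₂, Subgroup.mem_prod] using @hle (1, h))
  have hN₁ : ¬ N₁ ≤ N₂ := fun hle => hg (by simpa [N₁, N₂, Subgroup.mem_prod] using @hle (g, 1))
  rcases Subgroup.map_eq_or_map_eq_of_preimage_union_eq hN₂ ψ hψ with h₂ | h₂ <;>
    rcases Subgroup.map_eq_or_map_eq_of_preimage_union_eq hN₁ ψ (by rwa [Set.union_comm])
      with h₁ | h₁
  · exact ⟨h₂, h₁⟩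
  · exact absurd (Subgroup.map_injective ψ.injective (h₂.trans h₁.symm)).le hN₂
  · exact absurd (Subgroup.map_injective ψ.injective (h₁.trans h₂.symm)).le hN₁
  · refine (hne ?_).elim
    obtain ⟨e, -, -⟩ := (ψ.trans MulEquiv.prodComm).exists_apply_eq_of_map_prod_le
      (by
        rintro _ ⟨x, hx, rfl⟩
        simpa [N₂, Subgroup.mem_prod] using h₁.le (Subgroup.mem_map_of_mem _ hx))
      (by
        rintro _ ⟨x, hx, rfl⟩
        simpa [N₁, Subgroup.mem_prod] using h₂.le (Subgroup.mem_map_of_mem _ hx))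
    exact ⟨e⟩

theorem MulEquiv.map_eq_self_of_eq_bot_or_eq_top {G : Type*} [Group G] (ψ : G ≃* G)
    {N : Subgroup G} (hN : N = ⊥ ∨ N = ⊤) : N.map ψ.toMonoidHom = N := by
  rcases hN with rfl | rfl
  exacts [Subgroup.map_bot _, Subgroup.map_top_of_surjective _ ψ.surjective]

theorem aut_prod_splits {Γ₁ Γ₂ : Type*} [Group Γ₁] [Group Γ₂]
    (hc₁ : ∀ x : Γ₁, x ≠ 1 → Nonempty (Subgroup.centralizer ({x} : Set Γ₁) ≃* Multiplicative ℤ))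
    (hc₂ : ∀ x : Γ₂, x ≠ 1 → Nonempty (Subgroup.centralizer ({x} : Set Γ₂) ≃* Multiplicative ℤ))
    (hne : ¬ Nonempty (Γ₁ ≃* Γ₂))
    (hΓ₁ : ¬ Nonempty (Γ₁ ≃* Multiplicative ℤ))
    (hΓ₂ : ¬ Nonempty (Γ₂ ≃* Multiplicative ℤ))
    (ψ : (Γ₁ × Γ₂) ≃* (Γ₁ × Γ₂)) :
    (Subgroup.map ψ.toMonoidHom (((⊥ : Subgroup Γ₁).prod (⊤ : Subgroup Γ₂)))
        = (⊥ : Subgroup Γ₁).prod (⊤ : Subgroup Γ₂)) ∧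
    (Subgroup.map ψ.toMonoidHom (((⊤ : Subgroup Γ₁).prod (⊥ : Subgroup Γ₂)))
        = (⊤ : Subgroup Γ₁).prod (⊥ : Subgroup Γ₂)) ∧
    ∃ (ψ₁ : Γ₁ ≃* Γ₁) (ψ₂ : Γ₂ ≃* Γ₂), ∀ g : Γ₁, ∀ h : Γ₂, ψ (g, h) = (ψ₁ g, ψ₂ h) := by
  obtain ⟨h₂, h₁⟩ :
      ((⊥ : Subgroup Γ₁).prod (⊤ : Subgroup Γ₂)).map ψ.toMonoidHom = (⊥ : Subgroup Γ₁).prod ⊤ ∧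
      ((⊤ : Subgroup Γ₁).prod (⊥ : Subgroup Γ₂)).map ψ.toMonoidHom = (⊤ : Subgroup Γ₁).prod ⊥ := by
    rcases subsingleton_or_nontrivial Γ₁ with _ | _
    · have h : (⊥ : Subgroup Γ₁) = ⊤ := Subsingleton.elim _ _
      exact ⟨ψ.map_eq_self_of_eq_bot_or_eq_top (.inr (by rw [h, Subgroup.top_prod_top])),
        ψ.map_eq_self_of_eq_bot_or_eq_top (.inl (by rw [← h, Subgroup.bot_prod_bot]))⟩
    rcases subsingleton_or_nontrivial Γ₂ with _ | _
    · have h : (⊥ : Subgroup Γ₂) = ⊤ := Subsingleton.elim _ _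
      exact ⟨ψ.map_eq_self_of_eq_bot_or_eq_top (.inl (by rw [← h, Subgroup.bot_prod_bot])),
        ψ.map_eq_self_of_eq_bot_or_eq_top (.inr (by rw [h, Subgroup.top_prod_top]))⟩
    exact map_prod_factors_eq_of_hasCommCentralizer_iff (hasCommCentralizer_iff_ne_one hc₁ hΓ₁)
      (hasCommCentralizer_iff_ne_one hc₂ hΓ₂) hne ψ
  exact ⟨h₂, h₁, ψ.exists_apply_eq_of_map_prod_le h₁.le h₂.le⟩
end

section
/- Let Γ₁ and Γ₂ be groups in which every nontrivial element has centralizer isomorphic to ℤ and neither Γ₁ nor Γ₂ is isomorphic to ℤ. Then for every automorphism ψ of Γ := Γ₁ × Γ₂, the square ψ² preserves each factor subgroup: ψ²({1} × Γ₂) = {1} × Γ₂ and ψ²(Γ₁ × {1}) = Γ₁ × {1}. -/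
/-!
Whether the centralizer of an element is commutative is invariant under automorphisms. In
`Γ₁ × Γ₂` the centralizer of `(a, b)` is `C(a) × C(b)`, and in each factor the only element with
noncommutative centralizer is `1`: centralizers of nontrivial elements are `≅ ℤ`, while the factor
itself is not `ℤ`, hence not abelian. So the elements of the product with noncommutative centralizer
form the union of the two factor subgroups, and every automorphism preserves that union. A subgroup
contained in a union of two subgroups lies in one of them, so an automorphism maps the two
(incomparable) factors to themselves or swaps them, and its square fixes both.
-/

def HasNoncommCentralizer {G : Type*} [Mul G] (w : G) : Prop :=
  ∃ y z : G, Commute y w ∧ Commute z w ∧ ¬Commute y z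

namespace HasNoncommCentralizer

variable {G H : Type*} [Group G] [Group H]

theorem map {w : G} (h : HasNoncommCentralizer w) (φ : G ≃* H) :
    HasNoncommCentralizer (φ w) := by
  obtain ⟨y, z, hy, hz, hyz⟩ := h
  exact ⟨φ y, φ z, hy.map φ, hz.map φ, (commute_map_iff φ.injective).not.2 hyz⟩

theorem _root_.MulEquiv.hasNoncommCentralizer_apply_iff (φ : G ≃* H) {w : G} :
    HasNoncommCentralizer (φ w) ↔ HasNoncommCentralizer w :=
  ⟨fun h => by simpa using h.map φ.symm, fun h => h.map φ⟩

theorem not_of_centralizer_mulEquiv {M : Type*} [CommMagma M] {x : G}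
    (e : Subgroup.centralizer {x} ≃* M) : ¬HasNoncommCentralizer x := by
  rintro ⟨y, z, hy, hz, hyz⟩
  have hy' := Subgroup.mem_centralizer_singleton_iff.2 hy
  have hz' := Subgroup.mem_centralizer_singleton_iff.2 hz
  have : (⟨y, hy'⟩ * ⟨z, hz'⟩ : Subgroup.centralizer {x}) = ⟨z, hz'⟩ * ⟨y, hy'⟩ :=
    e.injective (by rw [map_mul, map_mul, mul_comm])
  exact hyz (congrArg Subtype.val this)

theorem one_of_centralizer_mulEquiv {M : Type*} [Mul M] {x : G}
    (e : Subgroup.centralizer {x} ≃* M) (hG : ¬Nonempty (G ≃* M)) :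
    HasNoncommCentralizer (1 : G) := by
  by_contra h
  have hcomm : ∀ y z : G, Commute y z := by
    simpa [HasNoncommCentralizer] using h
  have htop : Subgroup.centralizer {x} = ⊤ :=
    Subgroup.eq_top_iff' _ |>.2 fun y => Subgroup.mem_centralizer_singleton_iff.2 (hcomm y x)
  exact hG ⟨Subgroup.topEquiv.symm.trans ((MulEquiv.subgroupCongr htop).symm.trans e)⟩

theorem prod_iff {w : G × H} :
    HasNoncommCentralizer w ↔ HasNoncommCentralizer w.1 ∨ HasNoncommCentralizer w.2 := by
  constructor
  · rintro ⟨y, z, hy, hz, hyz⟩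
    rw [Prod.commute_iff] at hy hz hyz
    rw [not_and_or] at hyz
    exact hyz.imp (fun h => ⟨y.1, z.1, hy.1, hz.1, h⟩) (fun h => ⟨y.2, z.2, hy.2, hz.2, h⟩)
  · rintro (⟨y, z, hy, hz, hyz⟩ | ⟨y, z, hy, hz, hyz⟩)
    · exact ⟨(y, 1), (z, 1), .prod hy (.one_left _), .prod hz (.one_left _),
        fun h => hyz (Prod.commute_iff.1 h).1⟩
    · exact ⟨(1, y), (1, z), .prod (.one_left _) hy, .prod (.one_left _) hz,
        fun h => hyz (Prod.commute_iff.1 h).2⟩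

theorem iff_eq_one_of_centralizer_mulEquiv {M : Type*} [CommMagma M] [Nontrivial G]
    (hc : ∀ x : G, x ≠ 1 → Nonempty (Subgroup.centralizer {x} ≃* M))
    (hG : ¬Nonempty (G ≃* M)) {x : G} : HasNoncommCentralizer x ↔ x = 1 := by
  obtain ⟨x₀, hx₀⟩ := exists_ne (1 : G)
  exact ⟨fun h => by_contra fun hx => not_of_centralizer_mulEquiv (hc x hx).some h,
    fun h => h ▸ one_of_centralizer_mulEquiv (hc x₀ hx₀).some hG⟩

end HasNoncommCentralizer

namespace Subgroup

variable {G : Type*} [Group G] {A B : Subgroup G} {φ : G ≃* G}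

theorem map_equiv_eq_of_map_le_of_union_invariant
    (hφ : ∀ x, φ x ∈ (A : Set G) ∪ B ↔ x ∈ (A : Set G) ∪ B) (hAB : ¬A ≤ B)
    {C : Subgroup G} (hC : (C : Set G) ⊆ A ∪ B) (h : A.map φ.toMonoidHom ≤ C) :
    A.map φ.toMonoidHom = C := by
  have hcomap : C.comap φ.toMonoidHom ≤ A := by
    exact (SubgroupClass.subset_union.1 fun x hx => (hφ x).1 (hC hx)).resolve_right
      fun hB => hAB ((map_le_iff_le_comap.1 h).trans hB)
  refine le_antisymm h ?_
  calc C = (C.comap φ.toMonoidHom).map φ.toMonoidHom :=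
        (map_comap_eq_self_of_surjective φ.surjective C).symm
    _ ≤ A.map φ.toMonoidHom := map_mono hcomap

theorem map_equiv_eq_or_eq_of_union_invariant
    (hφ : ∀ x, φ x ∈ (A : Set G) ∪ B ↔ x ∈ (A : Set G) ∪ B) (hAB : ¬A ≤ B) :
    A.map φ.toMonoidHom = A ∨ A.map φ.toMonoidHom = B := by
  have hmap : (A.map φ.toMonoidHom : Set G) ⊆ A ∪ B := by
    rintro _ ⟨x, hx, rfl⟩
    exact (hφ x).2 (Or.inl hx)
  exact (SubgroupClass.subset_union.1 hmap).imp
    (map_equiv_eq_of_map_le_of_union_invariant hφ hAB Set.subset_union_left)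
    (map_equiv_eq_of_map_le_of_union_invariant hφ hAB Set.subset_union_right)

theorem map_trans_eq_self_of_union_invariant
    (hφ : ∀ x, φ x ∈ (A : Set G) ∪ B ↔ x ∈ (A : Set G) ∪ B) (hAB : ¬A ≤ B) (hBA : ¬B ≤ A) :
    A.map (φ.trans φ).toMonoidHom = A ∧ B.map (φ.trans φ).toMonoidHom = B := by
  have hφ' : ∀ x, φ x ∈ (B : Set G) ∪ A ↔ x ∈ (B : Set G) ∪ A := by
    simpa only [Set.union_comm] using hφ
  have hne : A.map φ.toMonoidHom ≠ B.map φ.toMonoidHom := fun h =>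
    hAB (map_injective φ.injective h).le
  have hsq : ∀ K : Subgroup G, K.map (φ.trans φ).toMonoidHom =
      (K.map φ.toMonoidHom).map φ.toMonoidHom := fun K => by rw [map_map]; rfl
  rcases map_equiv_eq_or_eq_of_union_invariant hφ hAB with hA | hA <;>
  rcases map_equiv_eq_or_eq_of_union_invariant hφ' hBA with hB | hB
  all_goals first
    | exact absurd (hA.trans hB.symm) hne
    | simp only [hsq, hA, hB, and_self]

theorem map_equiv_eq_self_of_eq_bot_or_eq_top {K : Subgroup G} (φ : G ≃* G)
    (hK : K = ⊥ ∨ K = ⊤) : K.map φ.toMonoidHom = K := by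
  rcases hK with rfl | rfl
  · exact map_bot _
  · exact map_top_of_surjective _ φ.surjective

end Subgroup

theorem aut_prod_square_preserves {Γ₁ Γ₂ : Type*} [Group Γ₁] [Group Γ₂]
    (hc₁ : ∀ x : Γ₁, x ≠ 1 → Nonempty (Subgroup.centralizer ({x} : Set Γ₁) ≃* Multiplicative ℤ))
    (hc₂ : ∀ x : Γ₂, x ≠ 1 → Nonempty (Subgroup.centralizer ({x} : Set Γ₂) ≃* Multiplicative ℤ))
    (hΓ₁ : ¬ Nonempty (Γ₁ ≃* Multiplicative ℤ))
    (hΓ₂ : ¬ Nonempty (Γ₂ ≃* Multiplicative ℤ))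
    (ψ : (Γ₁ × Γ₂) ≃* (Γ₁ × Γ₂)) :
    (Subgroup.map (ψ.trans ψ).toMonoidHom (((⊥ : Subgroup Γ₁).prod (⊤ : Subgroup Γ₂)))
        = (⊥ : Subgroup Γ₁).prod (⊤ : Subgroup Γ₂)) ∧
    (Subgroup.map (ψ.trans ψ).toMonoidHom (((⊤ : Subgroup Γ₁).prod (⊥ : Subgroup Γ₂)))
        = (⊤ : Subgroup Γ₁).prod (⊥ : Subgroup Γ₂)) := by
  open Subgroup in
  rcases subsingleton_or_nontrivial Γ₁ with _ | _
  · have h : (⊥ : Subgroup Γ₁) = ⊤ := Subsingleton.elim _ _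
    exact ⟨map_equiv_eq_self_of_eq_bot_or_eq_top _ (.inr (by rw [h, top_prod_top])),
      map_equiv_eq_self_of_eq_bot_or_eq_top _ (.inl (by rw [← h, bot_prod_bot]))⟩
  rcases subsingleton_or_nontrivial Γ₂ with _ | _
  · have h : (⊥ : Subgroup Γ₂) = ⊤ := Subsingleton.elim _ _
    exact ⟨map_equiv_eq_self_of_eq_bot_or_eq_top _ (.inl (by rw [← h, bot_prod_bot])),
      map_equiv_eq_self_of_eq_bot_or_eq_top _ (.inr (by rw [h, top_prod_top]))⟩
  have hS : ∀ w : Γ₁ × Γ₂, w ∈ ((⊥ : Subgroup Γ₁).prod (⊤ : Subgroup Γ₂) : Set (Γ₁ × Γ₂)) ∪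
      (⊤ : Subgroup Γ₁).prod (⊥ : Subgroup Γ₂) ↔ HasNoncommCentralizer w := by
    intro w
    rw [HasNoncommCentralizer.prod_iff,
      HasNoncommCentralizer.iff_eq_one_of_centralizer_mulEquiv hc₁ hΓ₁,
      HasNoncommCentralizer.iff_eq_one_of_centralizer_mulEquiv hc₂ hΓ₂]
    simp [mem_prod]
  refine map_trans_eq_self_of_union_invariant
    (fun w => by rw [hS, hS, ψ.hasNoncommCentralizer_apply_iff]) ?_ ?_ <;>
  simp [SetLike.not_le_iff_exists, mem_prod, exists_ne]
end

section
/- Let (X̃, d) be a metric space with a group Γ acting by isometries, and let F̃, G̃ : X̃ → X̃ be Γ-equivariant bijections (F̃(γx) = γF̃(x) for all γ ∈ Γ, and similarly for G̃) which moreover commute with the Γ-action in the same way. Suppose x̃, ỹ ∈ X̃ and t ∈ Γ satisfy F̃ⁿ(x̃) = t·x̃ and G̃ⁿ(ỹ) = t·ỹ for some n ≥ 1, and suppose that for every γ ∈ Γ and every k ∈ ℤ, F̃ᵏ ∘ γ ∘ F̃⁻ᵏ = G̃ᵏ ∘ γ ∘ G̃⁻ᵏ as maps (i.e., F̃ and G̃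 induce the same automorphisms of Γ). Then the set {d(F̃ᵏ x̃, G̃ᵏ ỹ) : k ∈ ℤ} is finite; in fact d(F̃ᵏ x̃, G̃ᵏ ỹ) = d(F̃^(k mod n) x̃, G̃^(k mod n) ỹ) for all k ∈ ℤ. In particular sup over k ∈ ℤ of d(F̃ᵏ x̃, G̃ᵏ ỹ) is bounded. -/
/-!
Since `F ^ n` sends `x` to `t • x`, we get `F ^ (k + n) x = F ^ k (t • x) = γ' • F ^ k x`, and
likewise `G ^ (k + n) y = γ' • G ^ k y` with the *same* `γ'`, because `F` and `G` induce the same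
outer action on `Γ`. As `γ'` is an isometry, `k ↦ dist (F ^ k x) (G ^ k y)` is `n`-periodic, so it
takes only the values it takes on `[0, n]`.
-/

namespace Function.Periodic

theorem map_emod_int {α : Type*} {f : ℤ → α} {c : ℤ} (hf : Periodic f c) (k : ℤ) :
    f (k % c) = f k := by
  rw [Int.emod_def, mul_comm]
  exact hf.sub_int_mul_eq _

theorem finite_range {α β : Type*} [AddCommGroup α] [LinearOrder α] [IsOrderedAddMonoid α]
    [Archimedean α] [LocallyFiniteOrder α] {f : α → β} {c : α} (hf : Periodic f c) (hc : 0 < c) :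
    (Set.range f).Finite :=
  hf.image_Icc hc 0 ▸ (Set.finite_Icc _ _).image f

end Function.Periodic

theorem periodic_dist_zpow_apply {X Γ : Type*} [MetricSpace X] [Group Γ] [MulAction Γ X]
    (hiso : ∀ γ : Γ, Isometry (fun x : X => γ • x)) {F G : Equiv.Perm X} {t : Γ}
    (hconj : ∀ k : ℤ, ∃ γ' : Γ,
      (∀ x : X, (F ^ k) (t • x) = γ' • (F ^ k) x) ∧ (∀ x : X, (G ^ k) (t • x) = γ' • (G ^ k) x))
    {x y : X} {n : ℤ} (hFx : (F ^ n) x = t • x) (hGy : (G ^ n) y = t • y) :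
    Function.Periodic (fun k : ℤ => dist ((F ^ k) x) ((G ^ k) y)) n := by
  intro k
  obtain ⟨γ', hF, hG⟩ := hconj k
  have hFk : (F ^ (k + n)) x = γ' • (F ^ k) x := by
    rw [zpow_add, Equiv.Perm.mul_apply, hFx, hF]
  have hGk : (G ^ (k + n)) y = γ' • (G ^ k) y := by
    rw [zpow_add, Equiv.Perm.mul_apply, hGy, hG]
  simp only [hFk, hGk]
  exact (hiso γ').dist_eq _ _

theorem nielsen_implies_bounded_shadowing {X : Type*} [MetricSpace X]
    {Γ : Type*} [Group Γ] [MulAction Γ X]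
    (hiso : ∀ γ : Γ, Isometry (fun x : X => γ • x))
    (F G : Equiv.Perm X)
    (hconj : ∀ (γ : Γ) (k : ℤ), ∃ γ' : Γ,
      (∀ x : X, (F ^ k) (γ • x) = γ' • (F ^ k) x) ∧
      (∀ x : X, (G ^ k) (γ • x) = γ' • (G ^ k) x))
    (x y : X) (t : Γ) (n : ℕ) (hn : 1 ≤ n)
    (hFx : (F ^ n) x = t • x) (hGy : (G ^ n) y = t • y) :
    (Set.range fun k : ℤ => dist ((F ^ k) x) ((G ^ k) y)).Finite ∧
    (∀ k : ℤ, dist ((F ^ k) x) ((G ^ k) y)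
        = dist ((F ^ (k % (n : ℤ))) x) ((G ^ (k % (n : ℤ))) y)) ∧
    ∃ B : ℝ, ∀ k : ℤ, dist ((F ^ k) x) ((G ^ k) y) ≤ B := by
  have hper := periodic_dist_zpow_apply hiso (hconj t)
    (n := n) (by rwa [zpow_natCast]) (by rwa [zpow_natCast])
  have hfin := hper.finite_range (Int.natCast_pos.mpr hn)
  obtain ⟨B, hB⟩ := hfin.bddAbove
  exact ⟨hfin, fun k => (hper.map_emod_int k).symm, B, fun k => hB ⟨k, rfl⟩⟩
end

section
/- Let (X̃, d) be a metric space, F̃, G̃ : X̃ → X̃ bijections, and suppose there exist functions dₛ, dᵤ : X̃ × X̃ → [0,∞) with d = sqrt(dₛ² + dᵤ²), a constant λ > 1, and R ≥ 0 such that dᵤ(F̃x, G̃y) ≥ λ·dᵤ(x,y) − R and dₛ(F̃⁻¹x, G̃⁻¹y) ≥ λ·dₛ(x,y) − R for all x,y. Set K = 2(R+1)/(λ−1). If dᵤ(x,y) > K/2 then dᵤ(F̃x, G̃y) > dᵤ(x,y) + 1; if dₛ(x,y) > K/2 then dₛ(F̃⁻¹x, G̃⁻¹y) > dₛ(x,y)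 + 1. Consequently, if sup_{k∈ℤ} d(F̃ᵏx, G̃ᵏy) < ∞, then dᵤ(F̃ᵏx, G̃ᵏy) ≤ K/2 and dₛ(F̃ᵏx, G̃ᵏy) ≤ K/2 for all k ∈ ℤ, and hence sup_{k∈ℤ} d(F̃ᵏx, G̃ᵏy) ≤ K. -/
/-!
Once `dᵤ(x, y) > (R + 1)/(λ - 1)`, the loss `R` is beaten by the gain `(λ - 1) dᵤ(x, y)`, so
`dᵤ` grows by more than `1` at every forward step and stays above the threshold; along an
orbit pair this forces `dᵤ(F̃ⁿ⁺ᵏ x, G̃ⁿ⁺ᵏ y) ≥ dᵤ(F̃ᵏ x, G̃ᵏ y) + n`, which is incompatible with a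
bounded distance. The same holds for `dₛ` and backward iteration, and two coordinates bounded
by `K/2` give `d ≤ √2 · K/2 ≤ K`.
-/

open Equiv

theorem add_one_lt_of_mul_sub_le {lam R a b : ℝ} (hlam : 1 < lam)
    (ha : (R + 1) / (lam - 1) < a) (hb : lam * a - R ≤ b) : a + 1 < b := by
  rw [div_lt_iff₀' (by linarith)] at ha
  linarith

theorem le_of_escape_of_bddAbove {a : ℕ → ℝ} {K : ℝ}
    (hstep : ∀ n, K < a n → a n + 1 < a (n + 1)) (hbdd : BddAbove (Set.range a)) :
    a 0 ≤ K := by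
  by_contra! h0
  have hgrow : ∀ n : ℕ, a 0 + n ≤ a n := by
    intro n
    induction n with
    | zero => simp
    | succ n ih =>
      have := hstep n (by linarith [(Nat.cast_nonneg n : (0 : ℝ) ≤ n)])
      push_cast
      linarith
  obtain ⟨B, hB⟩ := hbdd
  obtain ⟨n, hn⟩ := exists_nat_gt (B - a 0)
  linarith [hgrow n, hB ⟨n, rfl⟩]

theorem le_of_escape_of_bounded_orbit {X : Type*} (F G : Perm X) (φ : X → X → ℝ) {K : ℝ}
    (hstep : ∀ x y, K < φ x y → φ x y + 1 < φ (F x) (G y)) {x y : X} {B : ℝ}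
    (hB : ∀ n : ℕ, φ ((F ^ n) x) ((G ^ n) y) ≤ B) : φ x y ≤ K := by
  have hescape := le_of_escape_of_bddAbove (a := fun n => φ ((F ^ n) x) ((G ^ n) y)) (K := K)
    (fun n hn => by simpa only [pow_succ', Perm.mul_apply] using hstep _ _ hn)
    ⟨B, Set.forall_mem_range.2 hB⟩
  simpa only [pow_zero, Perm.one_apply] using hescape

theorem Equiv.Perm.pow_zpow_apply {X : Type*} (F : Perm X) (n : ℕ) (k : ℤ) (x : X) :
    (F ^ n) ((F ^ k) x) = (F ^ (n + k : ℤ)) x := by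
  rw [zpow_add, zpow_natCast, Perm.mul_apply]

theorem Equiv.Perm.inv_pow_zpow_apply {X : Type*} (F : Perm X) (n : ℕ) (k : ℤ) (x : X) :
    (F⁻¹ ^ n) ((F ^ k) x) = (F ^ (-n + k : ℤ)) x := by
  rw [zpow_add, zpow_neg, zpow_natCast, inv_pow, Perm.mul_apply]

theorem le_sqrt_sq_add_sq_left (a b : ℝ) : a ≤ √(a ^ 2 + b ^ 2) :=
  (le_abs_self a).trans (Real.abs_le_sqrt (by nlinarith [sq_nonneg b]))

theorem le_sqrt_sq_add_sq_right (a b : ℝ) : b ≤ √(a ^ 2 + b ^ 2) := by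
  rw [add_comm]
  exact le_sqrt_sq_add_sq_left b a

theorem sqrt_sq_add_sq_le_two_mul {a b c : ℝ} (ha₀ : 0 ≤ a) (ha : a ≤ c) (hb₀ : 0 ≤ b)
    (hb : b ≤ c) : √(a ^ 2 + b ^ 2) ≤ 2 * c :=
  Real.sqrt_le_iff.2 ⟨by linarith, by nlinarith⟩

theorem uniform_shadowing_constant_general {X : Type*} [MetricSpace X]
    (F G : Equiv.Perm X) (ds du : X → X → ℝ)
    (hds : ∀ x y, 0 ≤ ds x y) (hdu : ∀ x y, 0 ≤ du x y)
    (hd : ∀ x y : X, dist x y = Real.sqrt ((ds x y) ^ 2 + (du x y) ^ 2))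
    (lam R : ℝ) (hlam : 1 < lam)
    (hu : ∀ x y : X, lam * du x y - R ≤ du (F x) (G y))
    (hs : ∀ x y : X, lam * ds x y - R ≤ ds (F⁻¹ x) (G⁻¹ y)) :
    (∀ x y : X, 2 * (R + 1) / (lam - 1) / 2 < du x y →
        du x y + 1 < du (F x) (G y)) ∧
    (∀ x y : X, 2 * (R + 1) / (lam - 1) / 2 < ds x y →
        ds x y + 1 < ds (F⁻¹ x) (G⁻¹ y)) ∧
    (∀ x y : X, (∃ B : ℝ, ∀ k : ℤ, dist ((F ^ k) x) ((G ^ k) y) ≤ B) →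
      (∀ k : ℤ, du ((F ^ k) x) ((G ^ k) y) ≤ 2 * (R + 1) / (lam - 1) / 2 ∧
                 ds ((F ^ k) x) ((G ^ k) y) ≤ 2 * (R + 1) / (lam - 1) / 2) ∧
      ∀ k : ℤ, dist ((F ^ k) x) ((G ^ k) y) ≤ 2 * (R + 1) / (lam - 1)) := by
  rw [show 2 * (R + 1) / (lam - 1) / 2 = (R + 1) / (lam - 1) by ring, mul_div_assoc]
  have step_u : ∀ x y, (R + 1) / (lam - 1) < du x y → du x y + 1 < du (F x) (G y) :=
    fun x y h => add_one_lt_of_mul_sub_le hlam h (hu x y)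
  have step_s : ∀ x y, (R + 1) / (lam - 1) < ds x y → ds x y + 1 < ds (F⁻¹ x) (G⁻¹ y) :=
    fun x y h => add_one_lt_of_mul_sub_le hlam h (hs x y)
  have hdu_le : ∀ a b, du a b ≤ dist a b := fun a b => by
    rw [hd]; exact le_sqrt_sq_add_sq_right _ _
  have hds_le : ∀ a b, ds a b ≤ dist a b := fun a b => by
    rw [hd]; exact le_sqrt_sq_add_sq_left _ _
  refine ⟨step_u, step_s, fun x y ⟨B, hB⟩ => ?_⟩
  have hbounded : ∀ k : ℤ, du ((F ^ k) x) ((G ^ k) y) ≤ (R + 1) / (lam - 1) ∧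
      ds ((F ^ k) x) ((G ^ k) y) ≤ (R + 1) / (lam - 1) := fun k =>
    ⟨le_of_escape_of_bounded_orbit F G du step_u (B := B) fun n => by
        rw [Perm.pow_zpow_apply, Perm.pow_zpow_apply]
        exact (hdu_le _ _).trans (hB _),
      le_of_escape_of_bounded_orbit F⁻¹ G⁻¹ ds step_s (B := B) fun n => by
        rw [Perm.inv_pow_zpow_apply, Perm.inv_pow_zpow_apply]
        exact (hds_le _ _).trans (hB _)⟩
  refine ⟨hbounded, fun k => ?_⟩
  rw [hd]
  exact sqrt_sq_add_sq_le_two_mul (hds _ _) (hbounded k).2 (hdu _ _) (hbounded k).1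

theorem uniform_shadowing_constant {X : Type*} [MetricSpace X]
    (F G : Equiv.Perm X) (ds du : X → X → ℝ)
    (hds : ∀ x y, 0 ≤ ds x y) (hdu : ∀ x y, 0 ≤ du x y)
    (hd : ∀ x y : X, dist x y = Real.sqrt ((ds x y) ^ 2 + (du x y) ^ 2))
    (lam R : ℝ) (hlam : 1 < lam) (hR : 0 ≤ R)
    (hu : ∀ x y : X, lam * du x y - R ≤ du (F x) (G y))
    (hs : ∀ x y : X, lam * ds x y - R ≤ ds (F⁻¹ x) (G⁻¹ y)) :
    (∀ x y : X, 2 * (R + 1) / (lam - 1) / 2 < du x y →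
        du x y + 1 < du (F x) (G y)) ∧
    (∀ x y : X, 2 * (R + 1) / (lam - 1) / 2 < ds x y →
        ds x y + 1 < ds (F⁻¹ x) (G⁻¹ y)) ∧
    (∀ x y : X, (∃ B : ℝ, ∀ k : ℤ, dist ((F ^ k) x) ((G ^ k) y) ≤ B) →
      (∀ k : ℤ, du ((F ^ k) x) ((G ^ k) y) ≤ 2 * (R + 1) / (lam - 1) / 2 ∧
                 ds ((F ^ k) x) ((G ^ k) y) ≤ 2 * (R + 1) / (lam - 1) / 2) ∧
      ∀ k : ℤ, dist ((F ^ k) x) ((G ^ k) y) ≤ 2 * (R + 1) / (lam - 1)) :=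
  uniform_shadowing_constant_general F G ds du hds hdu hd lam R hlam hu hs
end
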